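/- Let f : T(G,A,α) → T(G,A,β) be a map given by f((a,(g,h^{-1}))) = (a + σ(g^{-1}h, h^{-1}), (g,h^{-1})) for some σ : G × G → A. If f commutes with P and Q, then σ(g,h) = g·σ(h,(gh)^{-1}) = -(gh)·σ(h^{-1},g^{-1}) for all g,h ∈ G, and consequently σ(g,h) = -σ(gh, h^{-1}). -/
import Mathlib


variable {G A : Type} [Group G] [AddCommGroup A] [DistribMulAction G A]

/-- `P((a,(g,h⁻¹))) = (g•a, (h⁻¹,g⁻¹h))`. -/
def pTw (g : G) (a : A) : A := g • a

/-- `Q((a,(g,h⁻¹))) = (-(g•a), (g⁻¹,h⁻¹g))`. -/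
def qTw (g : G) (a : A) : A := -(g • a)

/-- The value of `f((a,(g,h⁻¹))) = (a + σ(g⁻¹h,h⁻¹), (g,h⁻¹))`, written at a general
index: the element of `T(x,y)` with `A`-component `a` is sent to the one with component
`a + σ(x⁻¹y⁻¹, y)`. -/
def fTw (σ : G → G → A) (g h : G) (a : A) : A := a + σ (g⁻¹ * h) h⁻¹

/-- If `f((a,(g,h⁻¹))) = (a + σ(g⁻¹h,h⁻¹),(g,h⁻¹))` commutes with `P` and `Q`, then
`σ(g,h) = g•σ(h,(gh)⁻¹) = -(gh)•σ(h⁻¹,g⁻¹)`, and consequently `σ(g,h) = -σ(gh,h⁻¹)`. -/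
theorem morphism_sigma_identities (σ : G → G → A)
    (hP : ∀ (g h : G) (a : A),
      pTw g (fTw σ g h a) = fTw σ h⁻¹ (h⁻¹ * g) (pTw g a))
    (hQ : ∀ (g h : G) (a : A),
      qTw g (fTw σ g h a) = fTw σ g⁻¹ (g⁻¹ * h) (qTw g a)) :
    ∀ g h : G,
      σ g h = g • σ h (g * h)⁻¹ ∧
      σ g h = -((g * h) • σ h⁻¹ g⁻¹) ∧
      σ g h = -σ (g * h) h⁻¹ := by
  have hP' : ∀ g h : G, g • σ (g⁻¹ * h) h⁻¹ = σ g (g⁻¹ * h) := by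
    intro g h
    have := hP g h 0
    simp only [pTw, fTw, smul_add, smul_zero, zero_add] at this
    simpa [mul_assoc] using this
  have hQ' : ∀ g h : G, -(g • σ (g⁻¹ * h) h⁻¹) = σ h (h⁻¹ * g) := by
    intro g h
    have := hQ g h 0
    simp only [qTw, fTw, smul_add, smul_zero, neg_zero, zero_add, neg_add] at this
    have h2 := this
    rw [mul_inv_rev] at h2
    simp [mul_assoc] at h2
    linear_combination (norm := abel) h2
  intro g h
  have e1 : σ g h = g • σ h (g * h)⁻¹ := by
    have := hP' g (g * h)
    simpa [mul_assoc] using this.symm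
  have e2 : σ g h = -((g * h) • σ h⁻¹ g⁻¹) := by
    have := hQ' (g * h) g
    simp only [mul_inv_rev] at this
    simp [mul_assoc] at this
    linear_combination (norm := abel) -this
  refine ⟨e1, e2, ?_⟩
  have e3 : σ (g * h) h⁻¹ = (g * h) • σ h⁻¹ g⁻¹ := by
    have := hP' (g * h) g
    simp only [mul_inv_rev] at this
    simpa [mul_assoc] using this.symm
  rw [e3, e2]
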